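/- Let t be a selfadjoint regular operator on a Hilbert C*-module E. Then the operator F_t - i Q_t is a unitary element of the bounded adjointable operators L(E), where F_t = t(1+t^2)^{-1/2} and Q_t = (1+t^2)^{-1/2}. -/

import Mathlib

/-! Framework: unbounded (regular) operators on Hilbert C⋆-modules, bounded adjointable
operators, compact operators, Fredholm operators, Cayley and bounded transforms. -/

open scoped RightActions InnerProductSpace

noncomputable section

namespace RegularFredholm

/-- An unbounded operator on `E`: a (not necessarily closed) domain together with a
linear map into `E`. -/
structure UnboundedOp (A : Type*) [NonUnitalCStarAlgebra A] [PartialOrder A]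
    [StarOrderedRing A] (E : Type*) [NormedAddCommGroup E] [NormedSpace ℂ E]
    [SMul Aᵐᵒᵖ E] [CStarModule Aᵐᵒᵖ E] where
  dom : Submodule ℂ E
  toFun : dom →ₗ[ℂ] E

section Defs

variable {A : Type*} [NonUnitalCStarAlgebra A] [PartialOrder A] [StarOrderedRing A]
variable {E : Type*} [NormedAddCommGroup E] [NormedSpace ℂ E] [SMul Aᵐᵒᵖ E] [CStarModule Aᵐᵒᵖ E]

namespace UnboundedOp

variable (t s : UnboundedOp A E)

/-- Application of an unbounded operator at a point of its domain. -/
def app (x : E) (hx : x ∈ t.dom) : E := t.toFun ⟨x, hx⟩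

/-- `t` is densely defined. -/
def DenselyDefined : Prop := Dense (t.dom : Set E)

/-- The graph of `t` as a subset of `E × E`. -/
def graph : Set (E × E) := {p | ∃ hx : p.1 ∈ t.dom, t.app p.1 hx = p.2}

/-- `t` is a closed operator. -/
def IsClosedOp : Prop := IsClosed t.graph

/-- `t'` is the adjoint of `t`: it is a formal adjoint which is maximal among formal
adjoints. -/
def IsAdjoint (t' : UnboundedOp A E) : Prop :=
  (∀ x (hx : x ∈ t.dom) y (hy : y ∈ t'.dom),
      (MulOpposite.unop ⟪t.app x hx, y⟫_(Aᵐᵒᵖ) : A) = MulOpposite.unop ⟪x, t'.app y hy⟫_(Aᵐᵒᵖ)) ∧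
  ∀ y z : E, (∀ x (hx : x ∈ t.dom), (MulOpposite.unop ⟪t.app x hx, y⟫_(Aᵐᵒᵖ) : A) = MulOpposite.unop ⟪x, z⟫_(Aᵐᵒᵖ)) →
    ∃ hy : y ∈ t'.dom, t'.app y hy = z

/-- `t` is a regular operator with adjoint `t'`: it is closed, densely defined, has
densely defined adjoint `t'`, and `1 + t'∘t` (i.e. `1 + t⋆t`) has dense range. -/
def IsRegularPair (t' : UnboundedOp A E) : Prop :=
  t.DenselyDefined ∧ t.IsClosedOp ∧ t.IsAdjoint t' ∧ t'.DenselyDefined ∧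
    Dense {y : E | ∃ (x : E) (hx : x ∈ t.dom) (hx' : t.app x hx ∈ t'.dom),
      y = x + t'.app (t.app x hx) hx'}

/-- `t` is a selfadjoint regular operator. -/
def IsSelfAdjointRegular : Prop := t.IsRegularPair t

/-- The sum of an unbounded operator and a bounded operator, with the same domain. -/
def addBounded (D : E →L[ℂ] E) : UnboundedOp A E where
  dom := t.dom
  toFun := t.toFun + (D : E →ₗ[ℂ] E) ∘ₗ t.dom.subtype

/-- The sum of two unbounded operators, with domain the intersection of the domains. -/
def add : UnboundedOp A E where
  dom := t.dom ⊓ s.dom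
  toFun := t.toFun ∘ₗ Submodule.inclusion inf_le_left +
    s.toFun ∘ₗ Submodule.inclusion inf_le_right

/-- A bounded operator regarded as an unbounded operator with full domain. -/
def ofCLM (T : E →L[ℂ] E) : UnboundedOp A E where
  dom := ⊤
  toFun := (T : E →ₗ[ℂ] E) ∘ₗ (⊤ : Submodule ℂ E).subtype

/-- `R` is the (two-sided) inverse of `t + c` for a scalar `c`, i.e. `R = (t + c)⁻¹`. -/
def IsResolvent (c : ℂ) (R : E →L[ℂ] E) : Prop :=
  (∀ x : E, ∃ h : R x ∈ t.dom, t.app (R x) h + c • R x = x) ∧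
  ∀ x (hx : x ∈ t.dom), R (t.app x hx + c • x) = x

/-- `R` is the (two-sided) inverse of `1 + t'∘t`, i.e. `R = (1 + t⋆t)⁻¹`
(for `t` with adjoint `t'`). -/
def IsResolventSq (t' : UnboundedOp A E) (R : E →L[ℂ] E) : Prop :=
  (∀ x : E, ∃ (h : R x ∈ t.dom) (h' : t.app (R x) h ∈ t'.dom),
      t'.app (t.app (R x) h) h' + R x = x) ∧
  ∀ x (hx : x ∈ t.dom) (hx' : t.app x hx ∈ t'.dom),
    R (x + t'.app (t.app x hx) hx') = x

/-- `C` is the Cayley transform of `t`, namely `C = (t - i)(t + i)⁻¹`. -/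
def IsCayley (C : E →L[ℂ] E) : Prop :=
  ∃ R : E →L[ℂ] E, t.IsResolvent Complex.I R ∧
    ∀ x : E, ∃ h : R x ∈ t.dom, C x = t.app (R x) h - Complex.I • R x

/-- `Q` is the operator `(1 + t⋆t)^(-1/2)` (with `t'` the adjoint of `t`): `Q` is a
positive selfadjoint bounded operator whose square is the inverse of `1 + t'∘t`. -/
def IsSqrtResolvent (t' : UnboundedOp A E) (Q : E →L[ℂ] E) : Prop :=
  (∀ x y : E, (MulOpposite.unop ⟪Q x, y⟫_(Aᵐᵒᵖ) : A) = MulOpposite.unop ⟪x, Q y⟫_(Aᵐᵒᵖ)) ∧ (∀ x : E, (0 : A) ≤ MulOpposite.unop ⟪x, Q x⟫_(Aᵐᵒᵖ)) ∧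
    t.IsResolventSq t' (Q.comp Q)

/-- `F` is the bounded transform `t ∘ Q` of `t`, where `Q = (1 + t⋆t)^(-1/2)`. -/
def IsBoundedTransform (Q F : E →L[ℂ] E) : Prop :=
  ∀ x : E, ∃ h : Q x ∈ t.dom, F x = t.app (Q x) h

end UnboundedOp

end Defs

section BoundedDefs

variable (A : Type*) [NonUnitalCStarAlgebra A] [PartialOrder A] [StarOrderedRing A]
variable {E : Type*} [NormedAddCommGroup E] [NormedSpace ℂ E] [SMul Aᵐᵒᵖ E] [CStarModule Aᵐᵒᵖ E]

/-- `S` is an adjoint for the bounded operator `T`. -/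
def IsAdjointableB (T S : E →L[ℂ] E) : Prop :=
  ∀ x y : E, (MulOpposite.unop ⟪T x, y⟫_(Aᵐᵒᵖ) : A) = MulOpposite.unop ⟪x, S y⟫_(Aᵐᵒᵖ)

/-- `T` is a bounded adjointable operator. -/
def Adjointable (T : E →L[ℂ] E) : Prop := ∃ S : E →L[ℂ] E, IsAdjointableB A T S

/-- `T` is a "rank one" operator `θ_{x,y} : z ↦ x • ⟪y, z⟫`. -/
def IsRankOne (T : E →L[ℂ] E) : Prop :=
  ∃ x y : E, ∀ z : E, T z = x <• (MulOpposite.unop ⟪y, z⟫_(Aᵐᵒᵖ) : A)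

/-- `T` is a compact operator: it belongs to the closed linear span of the rank one
operators. -/
def IsCompactOp (T : E →L[ℂ] E) : Prop :=
  T ∈ closure (Submodule.span ℂ {S : E →L[ℂ] E | IsRankOne A S} : Set (E →L[ℂ] E))

/-- `T` is a Fredholm bounded adjointable operator: `T` is adjointable and invertible
modulo the compact operators. -/
def IsFredholmB (T : E →L[ℂ] E) : Prop :=
  Adjointable A T ∧ ∃ G : E →L[ℂ] E, Adjointable A G ∧
    IsCompactOp A (G * T - 1) ∧ IsCompactOp A (T * G - 1)

/-- `U` is a unitary element of the bounded adjointable operators. -/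
def IsUnitaryB (U : E →L[ℂ] E) : Prop :=
  ∃ U' : E →L[ℂ] E, IsAdjointableB A U U' ∧ U' * U = 1 ∧ U * U' = 1

end BoundedDefs

section MoreDefs

variable {A : Type*} [NonUnitalCStarAlgebra A] [PartialOrder A] [StarOrderedRing A]
variable {E : Type*} [NormedAddCommGroup E] [NormedSpace ℂ E] [SMul Aᵐᵒᵖ E] [CStarModule Aᵐᵒᵖ E]

/-- A regular operator `t` (with adjoint `t'`) is Fredholm if its bounded transform
`F_t = t (1 + t⋆t)^(-1/2)` is a Fredholm bounded adjointable operator. -/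
def UnboundedOp.IsFredholm (t t' : UnboundedOp A E) : Prop :=
  ∃ Q F : E →L[ℂ] E, t.IsSqrtResolvent t' Q ∧ t.IsBoundedTransform Q F ∧ IsFredholmB A F

/-- `s` is relatively `t`-compact: the map `s : E(t) → E`, where `E(t)` is the domain of
`t` equipped with the graph inner product `⟪x,y⟫ + ⟪t x, t y⟫`, lies in the closed linear
span of the rank one operators `E(t) → E`; i.e. it can be approximated, in the operator
norm for maps `E(t) → E`, by finite sums of operators
`θ_{x,y} : z ↦ x • (⟪y, z⟫ + ⟪t y, t z⟫)` with `x ∈ E`, `y ∈ E(t)`. -/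
def IsRelativelyCompact (t s : UnboundedOp A E) (hsub : t.dom ≤ s.dom) : Prop :=
  ∀ ε > (0 : ℝ), ∃ (n : ℕ) (x : Fin n → E) (y : Fin n → E) (hy : ∀ i, y i ∈ t.dom),
    ∀ z (hz : z ∈ t.dom),
      ‖s.app z (hsub hz) - ∑ i, x i <•
          ((MulOpposite.unop ⟪y i, z⟫_(Aᵐᵒᵖ) : A) + MulOpposite.unop ⟪t.app (y i) (hy i), t.app z hz⟫_(Aᵐᵒᵖ))‖ ≤
        ε * Real.sqrt ‖(MulOpposite.unop ⟪z, z⟫_(Aᵐᵒᵖ) : A) + MulOpposite.unop ⟪t.app z hz, t.app z hz⟫_(Aᵐᵒᵖ)‖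

/-- The graph of `t` inside the Hilbert C⋆-module `E ⊕ E`. -/
def graphSet (t : UnboundedOp A E) : Set (WithCStarModule Aᵐᵒᵖ (E × E)) :=
  {p | ∃ hx : (WithCStarModule.equiv Aᵐᵒᵖ (E × E) p).1 ∈ t.dom,
    t.app (WithCStarModule.equiv Aᵐᵒᵖ (E × E) p).1 hx = (WithCStarModule.equiv Aᵐᵒᵖ (E × E) p).2}

/-- `P` is the orthogonal projection of `E ⊕ E` onto the graph of `t`: a selfadjoint
idempotent whose range is the graph of `t`.  The gap metric between regular operators
`t`, `s` is `‖P_{G(t)} - P_{G(s)}‖` for the associated graph projections. -/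
def IsGraphProjection (t : UnboundedOp A E)
    (P : WithCStarModule Aᵐᵒᵖ (E × E) →L[ℂ] WithCStarModule Aᵐᵒᵖ (E × E)) : Prop :=
  IsAdjointableB A P P ∧ P * P = P ∧ Set.range P = graphSet t

end MoreDefs

variable {A : Type*} [NonUnitalCStarAlgebra A] [PartialOrder A] [StarOrderedRing A]
variable {E : Type*} [NormedAddCommGroup E] [NormedSpace ℂ E] [SMul Aᵐᵒᵖ E] [CStarModule Aᵐᵒᵖ E]

/-!
The point is that `Q` commutes with `t`, not merely `Q² = (1 + t²)⁻¹`. The resolvent `Q²`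
commutes with `t`, hence with `F = tQ`, so the commutator `K = QF - FQ`, which is selfadjoint,
anticommutes with `Q`. Then `QK² = -KQK ≤ 0`, while `QK² ≥ 0` as a product of commuting positive
operators; so `QK² = 0`, hence `QK = 0`, and `K = 0` because `Q` is injective. Once `QF = FQ`,
`F = Qt` on the domain of `t`, so `F` is selfadjoint, and `F² = t²Q² = 1 - Q²`. Consequently
`(F + iQ)(F - iQ) = (F - iQ)(F + iQ) = F² + Q² = 1`.
-/

open Filter Topology

section Forms

variable {A : Type*} [NonUnitalCStarAlgebra A] [PartialOrder A]
variable {E : Type*} [NormedAddCommGroup E] [NormedSpace ℂ E] [SMul A E] [CStarModule A E]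

variable (A) in
def IsSymmetricOp (T : E →L[ℂ] E) : Prop := ∀ x y : E, ⟪T x, y⟫_A = ⟪x, T y⟫_A

variable (A) in
def FormNonneg (T : E →L[ℂ] E) : Prop := ∀ x : E, 0 ≤ ⟪x, T x⟫_A

variable (A) in
def FormLE (T : E →L[ℂ] E) (c : ℝ) : Prop := ∀ x : E, ⟪x, T x⟫_A ≤ c • ⟪x, x⟫_A

namespace IsSymmetricOp

variable {S T : E →L[ℂ] E}

theorem sub (hS : IsSymmetricOp A S) (hT : IsSymmetricOp A T) : IsSymmetricOp A (S - T) :=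
  fun x y => by simp only [sub_apply, CStarModule.inner_sub_left, CStarModule.inner_sub_right,
    hS x y, hT x y]

theorem mul (hS : IsSymmetricOp A S) (hT : IsSymmetricOp A T) (hST : Commute S T) :
    IsSymmetricOp A (S * T) := fun x y => by
  rw [mul_apply_eq_comp, hS, hT, ← mul_apply_eq_comp, hST.eq, mul_apply_eq_comp]

theorem eq_zero_of_forall_inner_map_self_eq_zero (hT : IsSymmetricOp A T)
    (h : ∀ x, ⟪x, T x⟫_A = 0) : T = 0 := by
  ext x
  have hx : ⟪x + T x, T (x + T x)⟫_A = (2 : ℝ) • ⟪T x, T x⟫_A := by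
    rw [map_add, CStarModule.inner_add_left, CStarModule.inner_add_right,
      CStarModule.inner_add_right, h x, h (T x), ← hT x (T x), two_smul]
    abel
  rw [h, eq_comm, smul_eq_zero] at hx
  exact CStarModule.inner_self.mp (hx.resolve_left two_ne_zero)

end IsSymmetricOp

theorem eq_of_forall_inner_eq {x y : E} (h : ∀ z, ⟪z, x⟫_A = ⟪z, y⟫_A) : x = y :=
  sub_eq_zero.mp <| (CStarModule.inner_self (A := A)).mp <| by
    rw [CStarModule.inner_sub_right, h, sub_self]

theorem formNonneg_mul_self {T : E →L[ℂ] E} (hT : IsSymmetricOp A T) : FormNonneg A (T * T) :=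
  fun x => by rw [mul_apply_eq_comp, ← hT]; exact CStarModule.inner_self_nonneg

/-- The iteration `Sₙ₊₁ = Sₙ - Sₙ²` stands in for a square root of `S`: when `0 ≤ S ≤ 1` it
tends to `0` in norm, so `S = ∑_{k<n} Sₖ² + Sₙ` exhibits `⟪x, S B x⟫` as a limit of sums of
`⟪Sₖ x, B Sₖ x⟫ ≥ 0` whenever `B ≥ 0` commutes with `S`. -/
def subSqIter (S : E →L[ℂ] E) : ℕ → E →L[ℂ] E
  | 0 => S
  | n + 1 => subSqIter S n - subSqIter S n * subSqIter S n

theorem IsSymmetricOp.subSqIter {S : E →L[ℂ] E} (hS : IsSymmetricOp A S) (n : ℕ) :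
    IsSymmetricOp A (subSqIter S n) := by
  induction n with
  | zero => exact hS
  | succ n ih => exact ih.sub (ih.mul ih (Commute.refl _))

theorem commute_subSqIter {S B : E →L[ℂ] E} (h : Commute S B) (n : ℕ) :
    Commute (subSqIter S n) B := by
  induction n with
  | zero => exact h
  | succ n ih => exact ih.sub_left (ih.mul_left ih)

theorem inner_apply_apply_eq_sum_add_subSqIter {S B : E →L[ℂ] E} (hS : IsSymmetricOp A S)
    (hSB : Commute S B) (x : E) (n : ℕ) :
    ⟪x, S (B x)⟫_A = ∑ k ∈ Finset.range n, ⟪subSqIter S k x, B (subSqIter S k x)⟫_A +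
      ⟪x, subSqIter S n (B x)⟫_A := by
  induction n with
  | zero => simp [subSqIter]
  | succ n ih =>
    have hstep : ⟪x, subSqIter S n (subSqIter S n (B x))⟫_A =
        ⟪subSqIter S n x, B (subSqIter S n x)⟫_A :=
      (hS.subSqIter n x _).symm.trans
        (congrArg _ (DFunLike.congr_fun (commute_subSqIter hSB n).eq x))
    rw [ih, Finset.sum_range_succ, subSqIter, sub_apply, mul_apply_eq_comp,
      CStarModule.inner_sub_right, hstep]
    abel

variable [StarOrderedRing A]

theorem IsSymmetricOp.of_dense {s : Set E} (hs : Dense s) {T : E →L[ℂ] E}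
    (h : ∀ x, ∀ y ∈ s, ⟪T x, y⟫_A = ⟪x, T y⟫_A) : IsSymmetricOp A T :=
  fun x y => congrFun (Continuous.ext_on hs (by fun_prop) (by fun_prop) (h x)) y

theorem FormLE.mono {T : E →L[ℂ] E} {c d : ℝ} (hT : FormLE A T c) (hcd : c ≤ d) :
    FormLE A T d :=
  fun x => (hT x).trans (smul_le_smul_of_nonneg_right hcd CStarModule.inner_self_nonneg)

section SubMulSelf

variable {T : E →L[ℂ] E}

theorem FormNonneg.sub_mul_self (h0 : FormNonneg A T) (h1 : FormLE A T 1) :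
    FormNonneg A (T - T * T) := fun x => by
  have key : ⟪x, (T - T * T) x⟫_A =
      ⟪x - T x, T (x - T x)⟫_A + (⟪T x, T x⟫_A - ⟪T x, T (T x)⟫_A) := by
    simp only [sub_apply, mul_apply_eq_comp, map_sub, CStarModule.inner_sub_left,
      CStarModule.inner_sub_right]
    abel
  rw [key]
  exact add_nonneg (h0 _) (sub_nonneg.mpr (one_smul ℝ ⟪T x, T x⟫_A ▸ h1 (T x)))

theorem formLE_sub_mul_self_quarter (hT : IsSymmetricOp A T) : FormLE A (T - T * T) (1 / 4) :=
  fun x => by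
  have key : (1 / 4 : ℝ) • ⟪x, x⟫_A - ⟪x, (T - T * T) x⟫_A =
      ⟪(1 / 2 : ℝ) • x - T x, (1 / 2 : ℝ) • x - T x⟫_A := by
    simp only [sub_apply, mul_apply_eq_comp, CStarModule.inner_sub_left,
      CStarModule.inner_sub_right, CStarModule.inner_smul_left_real,
      CStarModule.inner_smul_right_real, hT x x, hT x (T x)]
    module
  exact sub_nonneg.mp (key ▸ CStarModule.inner_self_nonneg)

theorem FormLE.sub_mul_self {c : ℝ} (hT : IsSymmetricOp A T) (hc : FormLE A T c)
    (hc2 : c ≤ 1 / 2) : FormLE A (T - T * T) (c * (1 - c)) := fun x => by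
  have key : (c * (1 - c)) • ⟪x, x⟫_A - ⟪x, (T - T * T) x⟫_A =
      (1 - 2 * c) • (c • ⟪x, x⟫_A - ⟪x, T x⟫_A) + ⟪c • x - T x, c • x - T x⟫_A := by
    simp only [sub_apply, mul_apply_eq_comp, CStarModule.inner_sub_left,
      CStarModule.inner_sub_right, CStarModule.inner_smul_left_real,
      CStarModule.inner_smul_right_real, hT x x, hT x (T x), smul_smul, smul_sub]
    module
  refine sub_nonneg.mp (key ▸ add_nonneg (smul_nonneg (by linarith) ?_)
    CStarModule.inner_self_nonneg)
  exact sub_nonneg.mpr (hc x)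

end SubMulSelf

theorem norm_apply_le_of_formLE {T : E →L[ℂ] E} {c : ℝ} (hT : IsSymmetricOp A T)
    (h0 : FormNonneg A T) (hc : FormLE A T c) (hc0 : 0 < c) (y : E) : ‖T y‖ ≤ c * ‖y‖ := by
  set M := c • y - T y
  -- `c (cT - T²) = (c - T) T (c - T) + T (c - T) T`
  have hcross : 0 ≤ ⟪T y, M⟫_A := by
    have key : c • ⟪T y, M⟫_A = ⟪M, T M⟫_A + (c • ⟪T y, T y⟫_A - ⟪T y, T (T y)⟫_A) := by
      simp only [M, map_sub, ContinuousLinearMap.map_smul_of_tower, CStarModule.inner_sub_left,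
        CStarModule.inner_sub_right, CStarModule.inner_smul_left_real,
        CStarModule.inner_smul_right_real, hT y y, hT y (T y), smul_sub, smul_smul]
      module
    have := add_nonneg (h0 M) (sub_nonneg.mpr (hc (T y)))
    rw [← key] at this
    simpa only [smul_smul, inv_mul_cancel₀ hc0.ne', one_smul] using
      smul_nonneg (inv_nonneg.mpr hc0.le) this
  have hsq : ⟪T y, T y⟫_A ≤ (c * c) • ⟪y, y⟫_A := by
    have key : (c * c) • ⟪y, y⟫_A - ⟪T y, T y⟫_A = ⟪M, M⟫_A + (2 : ℝ) • ⟪T y, M⟫_A := by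
      simp only [M, CStarModule.inner_sub_left, CStarModule.inner_sub_right,
        CStarModule.inner_smul_left_real, CStarModule.inner_smul_right_real, hT y y, smul_sub,
        smul_smul]
      module
    exact sub_nonneg.mp (key ▸ add_nonneg CStarModule.inner_self_nonneg
      (smul_nonneg zero_le_two hcross))
  have hnorm : ‖T y‖ ^ 2 ≤ (c * ‖y‖) ^ 2 := by
    rw [CStarModule.norm_sq_eq (A := A), mul_pow, CStarModule.norm_sq_eq (A := A), sq,
      ← abs_of_pos (mul_pos hc0 hc0), ← Real.norm_eq_abs, ← norm_smul]
    exact CStarAlgebra.norm_le_norm_of_nonneg_of_le CStarModule.inner_self_nonneg hsq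
  exact abs_le_of_sq_le_sq' hnorm (by positivity) |>.2

section SubSqIter

variable {S : E →L[ℂ] E}

theorem formLE_subSqIter_succ (hS : IsSymmetricOp A S) (n : ℕ) :
    FormLE A (subSqIter S (n + 1)) (n + 4 : ℝ)⁻¹ := by
  induction n with
  | zero => simpa [subSqIter, one_div] using formLE_sub_mul_self_quarter hS
  | succ n ih =>
    have hn : (2 : ℝ) ≤ n + 4 := by linarith [(n.cast_nonneg : (0 : ℝ) ≤ n)]
    refine (ih.sub_mul_self (hS.subSqIter _) ?_).mono ?_
    · rw [inv_le_comm₀ (by positivity) (by norm_num)]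
      linarith
    · push_cast
      field_simp
      nlinarith

theorem formNonneg_subSqIter (hS : IsSymmetricOp A S) (h0 : FormNonneg A S)
    (h1 : FormLE A S 1) : ∀ n, FormNonneg A (subSqIter S n)
  | 0 => h0
  | n + 1 => by
    refine (formNonneg_subSqIter hS h0 h1 n).sub_mul_self ?_
    cases n with
    | zero => exact h1
    | succ n =>
      exact (formLE_subSqIter_succ hS n).mono
        (inv_le_one_of_one_le₀ (by linarith [(n.cast_nonneg : (0 : ℝ) ≤ n)]))

theorem tendsto_inner_subSqIter (hS : IsSymmetricOp A S) (h0 : FormNonneg A S)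
    (h1 : FormLE A S 1) (x y : E) :
    Tendsto (fun n => ⟪x, subSqIter S (n + 1) y⟫_A) atTop (𝓝 0) := by
  have hbound (n : ℕ) : ‖⟪x, subSqIter S (n + 1) y⟫_A‖ ≤ ‖x‖ * ‖y‖ * (n + 4 : ℝ)⁻¹ :=
    calc ‖⟪x, subSqIter S (n + 1) y⟫_A‖ ≤ ‖x‖ * ‖subSqIter S (n + 1) y‖ :=
          CStarModule.norm_inner_le E
      _ ≤ ‖x‖ * ((n + 4 : ℝ)⁻¹ * ‖y‖) := by
          gcongr
          exact norm_apply_le_of_formLE (hS.subSqIter _) (formNonneg_subSqIter hS h0 h1 _)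
            (formLE_subSqIter_succ hS n) (by positivity) y
      _ = ‖x‖ * ‖y‖ * (n + 4 : ℝ)⁻¹ := by ring
  refine squeeze_zero_norm hbound ?_
  simpa using (tendsto_inv_atTop_zero.comp (tendsto_atTop_add_const_right _ 4
    tendsto_natCast_atTop_atTop)).const_mul (‖x‖ * ‖y‖)

end SubSqIter

theorem FormNonneg.mul_of_commute {S B : E →L[ℂ] E} (hS : IsSymmetricOp A S)
    (hS0 : FormNonneg A S) (hS1 : FormLE A S 1) (hB : FormNonneg A B) (hSB : Commute S B) :
    FormNonneg A (S * B) := fun x => by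
  have hlim := (tendsto_inner_subSqIter hS hS0 hS1 x (B x)).const_sub ⟪x, S (B x)⟫_A
  rw [sub_zero] at hlim
  refine ge_of_tendsto' hlim fun n => ?_
  rw [inner_apply_apply_eq_sum_add_subSqIter hS hSB x (n + 1), add_sub_cancel_right]
  exact Finset.sum_nonneg fun k _ => hB _

theorem formLE_one_of_mul_self {Q : E →L[ℂ] E} (hQ : IsSymmetricOp A Q)
    (hQQ : FormLE A (Q * Q) 1) : FormLE A Q 1 := fun x => by
  have key : ⟪x - Q x, x - Q x⟫_A =
      ⟪x, x⟫_A + ⟪x, (Q * Q) x⟫_A - (2 : ℝ) • ⟪x, Q x⟫_A := by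
    simp only [mul_apply_eq_comp, CStarModule.inner_sub_left, CStarModule.inner_sub_right,
      hQ x x, hQ x (Q x), two_smul]
    abel
  have h2 : (2 : ℝ) • ⟪x, Q x⟫_A ≤ (2 : ℝ) • ⟪x, x⟫_A := by
    refine (sub_nonneg.mp (key ▸ CStarModule.inner_self_nonneg)).trans ?_
    rw [two_smul]
    exact add_le_add le_rfl (one_smul ℝ ⟪x, x⟫_A ▸ hQQ x)
  rw [one_smul]
  exact (smul_le_smul_iff_of_pos_left two_pos).mp h2

theorem mul_eq_zero_of_mul_eq_neg_mul {Q K : E →L[ℂ] E} (hQ : IsSymmetricOp A Q)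
    (hQ0 : FormNonneg A Q) (hQ1 : FormLE A Q 1) (hK : IsSymmetricOp A K)
    (hQK : Q * K = -(K * Q)) : Q * K = 0 := by
  have hKQ : K * Q = -(Q * K) := by rw [hQK, neg_neg]
  have hcomm : Commute Q (K * K) := by
    calc Q * (K * K) = -(K * Q * K) := by rw [← mul_assoc, hQK, neg_mul]
      _ = K * K * Q := by rw [mul_assoc, hQK, mul_neg, neg_neg, mul_assoc]
  have hpos := FormNonneg.mul_of_commute hQ hQ0 hQ1 (formNonneg_mul_self hK) hcomm
  have hQKK : Q * (K * K) = 0 := by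
    refine (hQ.mul (hK.mul hK (Commute.refl K)) hcomm).eq_zero_of_forall_inner_map_self_eq_zero
      fun x => le_antisymm ?_ (hpos x)
    have hform : ⟪x, (Q * (K * K)) x⟫_A = -⟪K x, Q (K x)⟫_A := by
      rw [← mul_assoc, hQK, neg_mul, neg_apply, CStarModule.inner_neg_right, mul_apply_eq_comp,
        mul_apply_eq_comp, hK]
    rw [hform, neg_nonpos]
    exact hQ0 _
  have hsq : K * Q * (Q * K) = Q * (Q * (K * K)) := by
    calc K * Q * (Q * K) = -(Q * K) * (Q * K) := congrArg (· * (Q * K)) hKQ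
      _ = -(Q * (K * Q) * K) := by noncomm_ring
      _ = Q * (Q * (K * K)) := by rw [hKQ]; noncomm_ring
  ext x
  rw [zero_apply]
  refine (CStarModule.inner_self (A := A)).mp ?_
  calc ⟪(Q * K) x, (Q * K) x⟫_A = ⟪x, (K * Q * (Q * K)) x⟫_A := by
        simp only [mul_apply_eq_comp, hK x, hQ (K x)]
    _ = 0 := by rw [hsq, hQKK, mul_zero, zero_apply, CStarModule.inner_zero_right]

end Forms

def UnboundedOp.IsSymmetric (t : UnboundedOp A E) : Prop :=
  ∀ x (hx : x ∈ t.dom) y (hy : y ∈ t.dom), ⟪t.app x hx, y⟫_(Aᵐᵒᵖ) = ⟪x, t.app y hy⟫_(Aᵐᵒᵖ)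

namespace UnboundedOp

variable {t : UnboundedOp A E} {Q F : E →L[ℂ] E}

theorem IsAdjoint.isSymmetric (h : t.IsAdjoint t) : t.IsSymmetric :=
  fun x hx y hy => MulOpposite.unop_injective (h.1 x hx y hy)

theorem app_congr {x y : E} (hx : x ∈ t.dom) (hy : y ∈ t.dom) (h : x = y) :
    t.app x hx = t.app y hy := by
  subst h
  rfl

theorem app_eq_zero {x : E} (hx : x ∈ t.dom) (h : x = 0) : t.app x hx = 0 := by
  subst h
  exact map_zero t.toFun

namespace IsSqrtResolvent

variable (hQ : t.IsSqrtResolvent t Q)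
include hQ

theorem isSymmetricOp : IsSymmetricOp Aᵐᵒᵖ Q :=
  fun x y => MulOpposite.unop_injective (hQ.1 x y)

theorem formNonneg : FormNonneg Aᵐᵒᵖ Q :=
  fun x => MulOpposite.unop_nonneg.mp (hQ.2.1 x)

theorem sq_mem_dom (x : E) : Q (Q x) ∈ t.dom := (hQ.2.2.1 x).fst

theorem app_sq_mem_dom (x : E) : t.app (Q (Q x)) (hQ.sq_mem_dom x) ∈ t.dom :=
  (hQ.2.2.1 x).snd.fst

theorem app_app_sq_add_sq (x : E) :
    t.app (t.app (Q (Q x)) (hQ.sq_mem_dom x)) (hQ.app_sq_mem_dom x) + Q (Q x) = x :=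
  (hQ.2.2.1 x).snd.snd

theorem injective : Function.Injective Q := fun x y hxy => by
  have hz : Q (Q (x - y)) = 0 := by rw [map_sub, hxy, sub_self, map_zero]
  rw [← sub_eq_zero, ← hQ.app_app_sq_add_sq (x - y), app_eq_zero _ (app_eq_zero _ hz), hz,
    add_zero]

theorem formLE_mul_self (ht : t.IsSymmetric) : FormLE Aᵐᵒᵖ (Q * Q) 1 := fun x => by
  have hx := hQ.app_app_sq_add_sq x
  set y := t.app (Q (Q x)) (hQ.sq_mem_dom x)
  set z := t.app y (hQ.app_sq_mem_dom x)
  have key : ⟪x, x⟫_(Aᵐᵒᵖ) - ⟪x, (Q * Q) x⟫_(Aᵐᵒᵖ) = ⟪z, z⟫_(Aᵐᵒᵖ) + ⟪y, y⟫_(Aᵐᵒᵖ) :=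
    calc ⟪x, x⟫_(Aᵐᵒᵖ) - ⟪x, (Q * Q) x⟫_(Aᵐᵒᵖ) = ⟪x, z⟫_(Aᵐᵒᵖ) := by
          rw [eq_sub_of_add_eq hx, CStarModule.inner_sub_right, mul_apply_eq_comp]
      _ = ⟪z + Q (Q x), z⟫_(Aᵐᵒᵖ) := by rw [hx]
      _ = ⟪z, z⟫_(Aᵐᵒᵖ) + ⟪y, y⟫_(Aᵐᵒᵖ) := by
          rw [CStarModule.inner_add_left, ← ht _ (hQ.sq_mem_dom x) _ (hQ.app_sq_mem_dom x)]
  rw [one_smul]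
  exact sub_nonneg.mp (key ▸ add_nonneg CStarModule.inner_self_nonneg
    CStarModule.inner_self_nonneg)

theorem sq_apply_app_eq_app_sq (ht : t.IsSymmetric) {x : E} (hx : x ∈ t.dom) :
    Q (Q (t.app x hx)) = t.app (Q (Q x)) (hQ.sq_mem_dom x) := by
  refine eq_of_forall_inner_eq (A := Aᵐᵒᵖ) fun z => ?_
  calc ⟪z, Q (Q (t.app x hx))⟫_(Aᵐᵒᵖ) = ⟪t.app (Q (Q z)) (hQ.sq_mem_dom z), x⟫_(Aᵐᵒᵖ) := by
        rw [← hQ.isSymmetricOp, ← hQ.isSymmetricOp, ht]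
    _ = ⟪t.app (Q (Q z)) (hQ.sq_mem_dom z),
          t.app (t.app (Q (Q x)) (hQ.sq_mem_dom x)) (hQ.app_sq_mem_dom x) + Q (Q x)⟫_(Aᵐᵒᵖ) := by
        rw [hQ.app_app_sq_add_sq x]
    _ = ⟪t.app (t.app (Q (Q z)) (hQ.sq_mem_dom z)) (hQ.app_sq_mem_dom z) + Q (Q z),
          t.app (Q (Q x)) (hQ.sq_mem_dom x)⟫_(Aᵐᵒᵖ) := by
        rw [CStarModule.inner_add_left, CStarModule.inner_add_right,
          ht _ (hQ.app_sq_mem_dom z) _ (hQ.app_sq_mem_dom x),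
          ht _ (hQ.sq_mem_dom z) _ (hQ.sq_mem_dom x)]
    _ = ⟪z, t.app (Q (Q x)) (hQ.sq_mem_dom x)⟫_(Aᵐᵒᵖ) := by rw [hQ.app_app_sq_add_sq z]

end IsSqrtResolvent

namespace IsBoundedTransform

variable (hF : t.IsBoundedTransform Q F)
include hF

theorem mem_dom (x : E) : Q x ∈ t.dom := (hF x).fst

theorem apply_eq (x : E) : F x = t.app (Q x) (hF.mem_dom x) := (hF x).snd

variable (ht : t.IsSymmetric) (hQ : t.IsSqrtResolvent t Q)
include ht hQ

theorem commute_mul_self : Commute F (Q * Q) := by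
  ext x
  simp only [mul_apply_eq_comp]
  rw [hF.apply_eq, hF.apply_eq, hQ.sq_apply_app_eq_app_sq ht]

theorem isSymmetricOp_sqrtResolvent_mul : IsSymmetricOp Aᵐᵒᵖ (Q * F) := fun x y => by
  simp only [mul_apply_eq_comp]
  rw [hQ.isSymmetricOp, hF.apply_eq x, hF.apply_eq y, ht, ← hQ.isSymmetricOp]

theorem isSymmetricOp_mul_sqrtResolvent (hd : t.DenselyDefined) : IsSymmetricOp Aᵐᵒᵖ (F * Q) :=
  IsSymmetricOp.of_dense hd fun x y hy => by
    simp only [mul_apply_eq_comp]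
    rw [hF.apply_eq, hF.apply_eq, ht, ← hQ.sq_apply_app_eq_app_sq ht hy, hQ.isSymmetricOp,
      hQ.isSymmetricOp]

theorem commute (hd : t.DenselyDefined) : Commute F Q := by
  set K := Q * F - F * Q
  have hK : IsSymmetricOp Aᵐᵒᵖ K :=
    (hF.isSymmetricOp_sqrtResolvent_mul ht hQ).sub (hF.isSymmetricOp_mul_sqrtResolvent ht hQ hd)
  have hQK : Q * K = -(K * Q) :=
    calc Q * K = Q * Q * F - Q * F * Q := by simp only [K]; noncomm_ring
      _ = F * (Q * Q) - Q * F * Q := by rw [(hF.commute_mul_self ht hQ).eq]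
      _ = -(K * Q) := by simp only [K]; noncomm_ring
  have hK0 : K = 0 := by
    ext x
    refine hQ.injective ?_
    rw [zero_apply, map_zero, ← mul_apply_eq_comp,
      mul_eq_zero_of_mul_eq_neg_mul hQ.isSymmetricOp hQ.formNonneg
        (formLE_one_of_mul_self hQ.isSymmetricOp (hQ.formLE_mul_self ht)) hK hQK, zero_apply]
  exact (sub_eq_zero.mp hK0).symm

theorem apply_eq_sqrtResolvent_app (hd : t.DenselyDefined) {y : E} (hy : y ∈ t.dom) :
    F y = Q (t.app y hy) := by
  refine hQ.injective ?_
  rw [← mul_apply_eq_comp, ← (hF.commute ht hQ hd).eq, mul_apply_eq_comp, hF.apply_eq,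
    hQ.sq_apply_app_eq_app_sq ht hy]

theorem isSymmetricOp (hd : t.DenselyDefined) : IsSymmetricOp Aᵐᵒᵖ F :=
  IsSymmetricOp.of_dense hd fun x y hy => by
    rw [hF.apply_eq, ht, hQ.isSymmetricOp, hF.apply_eq_sqrtResolvent_app ht hQ hd hy]

theorem mul_self_add_mul_self (hd : t.DenselyDefined) : F * F + Q * Q = 1 := by
  ext x
  have hQF : Q (F x) = t.app (Q (Q x)) (hQ.sq_mem_dom x) := by
    rw [← mul_apply_eq_comp, ← (hF.commute ht hQ hd).eq, mul_apply_eq_comp, hF.apply_eq]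
  rw [add_apply, mul_apply_eq_comp, mul_apply_eq_comp, one_apply_eq_self, hF.apply_eq (F x),
    app_congr _ (hQ.app_sq_mem_dom x) hQF, hQ.app_app_sq_add_sq]

end IsBoundedTransform

end UnboundedOp

omit [StarOrderedRing A] in
theorem isUnitaryB_sub_I_smul {F Q : E →L[ℂ] E} (hF : IsSymmetricOp Aᵐᵒᵖ F)
    (hQ : IsSymmetricOp Aᵐᵒᵖ Q) (hFQ : Commute F Q) (h : F * F + Q * Q = 1) :
    IsUnitaryB A (F - Complex.I • Q) := by
  refine ⟨F + Complex.I • Q, fun x y => congrArg MulOpposite.unop ?_, ?_, ?_⟩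
  · simp only [sub_apply, add_apply, smul_apply, CStarModule.inner_sub_left,
      CStarModule.inner_add_right, CStarModule.inner_smul_left_complex,
      CStarModule.inner_smul_right_complex, Complex.star_def, Complex.conj_I, hF x y, hQ x y,
      neg_smul, sub_neg_eq_add]
  all_goals
    rw [← h]
    simp only [add_mul, mul_add, sub_mul, mul_sub, smul_mul_assoc, mul_smul_comm, smul_add,
      smul_sub, smul_smul, Complex.I_mul_I, hFQ.eq]
    module

/-- For a selfadjoint regular operator `t`, the operator `F - i Q` is a
unitary element of the bounded adjointable operators, where `F` is the bounded transform
and `Q = (1+t²)^(-1/2)`. -/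
theorem isUnitary_boundedTransform_sub_smul_sqrtResolvent
    (t : UnboundedOp A E) (ht : t.IsSelfAdjointRegular)
    (Q F : E →L[ℂ] E) (hQ : t.IsSqrtResolvent t Q) (hF : t.IsBoundedTransform Q F) :
    IsUnitaryB A (F - Complex.I • Q) := by
  obtain ⟨hd, -, hadj, -⟩ := ht
  have hs := hadj.isSymmetric
  exact isUnitaryB_sub_I_smul (hF.isSymmetricOp hs hQ hd) hQ.isSymmetricOp
    (hF.commute hs hQ hd) (hF.mul_self_add_mul_self hs hQ hd)

end RegularFredholm
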